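/- For every ñ ∈ {1, …, n} and every ñ-dimensional linear subspace W of H, we have Σ_{j=1}^n inf_{η ∈ V_ñ} ‖ρ_j − η‖² ≤ Σ_{j=1}^n inf_{η ∈ W} ‖ρ_j − η‖²; that is, the subspace V_ñ spanned by the first ñ principal perturbations contains on average the best approximations of ρ_1, …, ρ_n among all subspaces of dimension ñ. -/

import Mathlib

open scoped BigOperators

open Finset

/-- The principal subspace `V_nt` spanned by the first `nt` principal
perturbations `ρ̂_1, …, ρ̂_nt` contains on average the best approximations of the
perturbations `ρ_1, …, ρ_n` among all `nt`-dimensional subspaces `W`. -/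
theorem principal_subspace_is_optimal
    {H : Type*} [NormedAddCommGroup H] [InnerProductSpace ℝ H]
    (n : ℕ) (hn : 1 ≤ n)
    (ρ : Fin n → H) (hρ : LinearIndependent ℝ ρ)
    (lam : Fin n → ℝ) (v : Fin n → Fin n → ℝ)
    (hpos : ∀ k, 0 < lam k)
    (hdec : ∀ p q : Fin n, p ≤ q → lam q ≤ lam p)
    (hortho : ∀ p q : Fin n, ∑ j, v p j * v q j = if p = q then (1 : ℝ) else 0)
    (heig : ∀ k i : Fin n,
      ∑ j, (inner ℝ (ρ i) (ρ j) : ℝ) * v k j = lam k * v k i)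
    (ρhat : Fin n → H)
    (hρhat : ∀ k, ρhat k = (Real.sqrt (lam k))⁻¹ • ∑ j, v k j • ρ j)
    (nt : ℕ) (hnt1 : 1 ≤ nt) (hntn : nt ≤ n)
    (V : Submodule ℝ H)
    (hV : V = Submodule.span ℝ {x | ∃ k : Fin n, (k : ℕ) < nt ∧ x = ρhat k})
    (W : Submodule ℝ H) (hWfd : FiniteDimensional ℝ W)
    (hW : Module.finrank ℝ W = nt) :
    ∑ j, (⨅ η : V, ‖ρ j - (η : H)‖ ^ 2) ≤ ∑ j, (⨅ η : W, ‖ρ j - (η : H)‖ ^ 2) := by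
  classical
  haveI := hWfd
  -- basic facts about eigenvalues
  have hsq : ∀ k, Real.sqrt (lam k) * Real.sqrt (lam k) = lam k :=
    fun k => Real.mul_self_sqrt (hpos k).le
  have hsqpos : ∀ k, 0 < Real.sqrt (lam k) := fun k => Real.sqrt_pos.2 (hpos k)
  -- column orthonormality of v
  have hcol : ∀ i j : Fin n, ∑ k, v k i * v k j = if i = j then (1 : ℝ) else 0 := by
    have hM : (Matrix.of v) * Matrix.transpose (Matrix.of v) = 1 := by
      ext p q
      simpa [Matrix.mul_apply, Matrix.one_apply] using hortho p q
    have hM' : Matrix.transpose (Matrix.of v) * (Matrix.of v) = 1 :=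
      mul_eq_one_comm.mp hM
    intro i j
    have h := congrFun (congrFun hM' i) j
    simpa [Matrix.mul_apply, Matrix.one_apply, Matrix.transpose_apply, mul_comm] using h
  -- coefficients of ρ in the ρhat basis
  set c : Fin n → Fin n → ℝ := fun k j => Real.sqrt (lam k) * v k j with hc
  have hcc : ∀ l m : Fin n, ∑ j, c l j * c m j = if l = m then lam l else 0 := by
    intro l m
    have h1 : ∑ j, c l j * c m j
        = Real.sqrt (lam l) * Real.sqrt (lam m) * ∑ j, v l j * v m j := by
      rw [Finset.mul_sum]; apply Finset.sum_congr rfl; intro j _; simp only [hc]; ring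
    rw [h1, hortho l m]
    by_cases h : l = m
    · subst h; simp [hsq l]
    · simp [h]
  -- ρhat is an orthonormal family
  have hhat : Orthonormal ℝ ρhat := by
    rw [orthonormal_iff_ite]
    intro p q
    have hYq : ∀ i, (inner ℝ (ρ i) (∑ j, v q j • ρ j) : ℝ) = lam q * v q i := by
      intro i
      rw [inner_sum]
      simp_rw [real_inner_smul_right]
      simpa [mul_comm] using heig q i
    have hXY : (inner ℝ (∑ i, v p i • ρ i) (∑ j, v q j • ρ j) : ℝ)
        = lam q * (if p = q then (1 : ℝ) else 0) := by
      rw [sum_inner]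
      simp_rw [real_inner_smul_left, hYq]
      rw [← hortho p q, Finset.mul_sum]
      apply Finset.sum_congr rfl; intro i _; ring
    rw [hρhat p, hρhat q, real_inner_smul_left, real_inner_smul_right, hXY]
    by_cases h : p = q
    · subst h
      simp only [if_pos rfl, mul_one]
      field_simp
      rw [Real.sq_sqrt (hpos p).le]
      exact div_self (hpos p).ne'
    · simp [h]
  -- expansion of ρ j in the orthonormal family ρhat
  have hexp : ∀ j, ρ j = ∑ k, c k j • ρhat k := by
    intro j
    have h1 : ∀ k : Fin n, c k j • ρhat k = ∑ i, (v k j * v k i) • ρ i := by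
      intro k
      rw [hρhat k, smul_smul, Finset.smul_sum]
      apply Finset.sum_congr rfl; intro i _
      rw [smul_smul]
      congr 1
      have : Real.sqrt (lam k) ≠ 0 := (hsqpos k).ne'
      simp only [hc]; field_simp
    calc ρ j = ∑ i, (if j = i then (1:ℝ) else 0) • ρ i := by
          simp [Finset.sum_ite_eq]
      _ = ∑ i, (∑ k, v k j * v k i) • ρ i := by
          apply Finset.sum_congr rfl; intro i _; rw [hcol j i]
      _ = ∑ i, ∑ k, (v k j * v k i) • ρ i := by
          apply Finset.sum_congr rfl; intro i _; rw [Finset.sum_smul]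
      _ = ∑ k, ∑ i, (v k j * v k i) • ρ i := Finset.sum_comm
      _ = ∑ k, c k j • ρhat k := by
          apply Finset.sum_congr rfl; intro k _; rw [h1 k]
  -- norms of partial sums
  have hnorm : ∀ (s : Finset (Fin n)) (j : Fin n),
      ‖∑ k ∈ s, c k j • ρhat k‖ ^ 2 = ∑ k ∈ s, (c k j) ^ 2 := by
    intro s j
    rw [← real_inner_self_eq_norm_sq, hhat.inner_sum]
    simp [sq]
  -- the index sets
  set A : Finset (Fin n) := univ.filter (fun k => (k : ℕ) < nt) with hA
  set B : Finset (Fin n) := univ.filter (fun k => ¬ (k : ℕ) < nt) with hB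
  have hAB : ∀ g : Fin n → ℝ, ∑ k, g k = ∑ k ∈ A, g k + ∑ k ∈ B, g k := by
    intro g
    rw [hA, hB, Finset.sum_filter_add_sum_filter_not]
  have hck : ∀ k, ∑ j, (c k j) ^ 2 = lam k := by
    intro k
    simp_rw [sq]
    simpa using hcc k k
  -- LHS bound: ∑ j, dist² (ρ j) V ≤ ∑_{k ∈ B} lam k
  have hLHS : ∑ j, (⨅ η : V, ‖ρ j - (η : H)‖ ^ 2) ≤ ∑ k ∈ B, lam k := by
    have step : ∀ j, (⨅ η : V, ‖ρ j - (η : H)‖ ^ 2) ≤ ∑ k ∈ B, (c k j) ^ 2 := by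
      intro j
      have hmem : (∑ k ∈ A, c k j • ρhat k) ∈ V := by
        rw [hV]
        refine Submodule.sum_mem _ (fun k hk => Submodule.smul_mem _ _ ?_)
        exact Submodule.subset_span ⟨k, (Finset.mem_filter.1 hk).2, rfl⟩
      have hdiff : ρ j - ∑ k ∈ A, c k j • ρhat k = ∑ k ∈ B, c k j • ρhat k := by
        rw [hexp j, hA, hB,
          ← Finset.sum_filter_add_sum_filter_not univ (fun k : Fin n => (k : ℕ) < nt)
            (fun k : Fin n => c k j • ρhat k)]
        abel
      have hbdd : BddBelow (Set.range fun η : V => ‖ρ j - (η : H)‖ ^ 2) := by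
        refine ⟨0, ?_⟩
        rintro x ⟨η, rfl⟩
        positivity
      calc (⨅ η : V, ‖ρ j - (η : H)‖ ^ 2)
          ≤ ‖ρ j - ((⟨∑ k ∈ A, c k j • ρhat k, hmem⟩ : V) : H)‖ ^ 2 :=
            ciInf_le hbdd _
        _ = ∑ k ∈ B, (c k j) ^ 2 := by rw [Submodule.coe_mk, hdiff, hnorm]
    calc ∑ j, (⨅ η : V, ‖ρ j - (η : H)‖ ^ 2)
        ≤ ∑ j, ∑ k ∈ B, (c k j) ^ 2 := Finset.sum_le_sum (fun j _ => step j)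
      _ = ∑ k ∈ B, ∑ j, (c k j) ^ 2 := Finset.sum_comm
      _ = ∑ k ∈ B, lam k := Finset.sum_congr rfl (fun k _ => hck k)
  -- orthonormal basis of W
  haveI : CompleteSpace W := FiniteDimensional.complete ℝ W
  let e : OrthonormalBasis (Fin nt) ℝ W := (stdOrthonormalBasis ℝ W).reindex (finCongr hW)
  let f : Fin nt → H := fun k => (e k : H)
  have hf : Orthonormal ℝ f := e.orthonormal.comp_linearIsometry W.subtypeₗᵢ
  -- per-vector lower bound on the distance to W
  have hWlow : ∀ j, ‖ρ j‖ ^ 2 - ∑ k, (inner ℝ (f k) (ρ j) : ℝ) ^ 2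
      ≤ ⨅ η : W, ‖ρ j - (η : H)‖ ^ 2 := by
    intro j
    haveI : Nonempty W := ⟨0⟩
    apply le_ciInf
    intro η
    set P : H := (W.orthogonalProjectionOnto (ρ j) : H) with hP
    have hPle : ‖ρ j - P‖ ≤ ‖ρ j - (η : H)‖ := by
      rw [hP, ← Submodule.starProjection_apply, Submodule.starProjection_minimal]
      exact ciInf_le ⟨0, by rintro x ⟨η', rfl⟩; positivity⟩ η
    have h1 : ‖ρ j - P‖ ^ 2 ≤ ‖ρ j - (η : H)‖ ^ 2 :=
      pow_le_pow_left₀ (norm_nonneg _) hPle 2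
    have horth : (inner ℝ (ρ j - P) P : ℝ) = 0 :=
      Submodule.starProjection_inner_eq_zero (ρ j) P (SetLike.coe_mem _)
    have hsplit : ‖ρ j‖ ^ 2 = ‖ρ j - P‖ ^ 2 + ‖P‖ ^ 2 := by
      have h := norm_add_sq_real (ρ j - P) P
      rw [sub_add_cancel, horth] at h
      linarith
    have hPnorm : ‖P‖ ^ 2 = ∑ k, (inner ℝ (f k) (ρ j) : ℝ) ^ 2 := by
      have hPsum : P = ∑ k, (inner ℝ (f k) (ρ j) : ℝ) • f k := by
        rw [hP, OrthonormalBasis.orthogonalProjectionOnto_apply_eq_sum e (ρ j)]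
        push_cast [Submodule.coe_sum]
        rfl
      rw [hPsum, ← real_inner_self_eq_norm_sq, hf.inner_sum]
      simp [sq]
    linarith
  -- the coefficients of f on the ρhat family
  set g : Fin nt → Fin n → ℝ := fun k l => (inner ℝ (f k) (ρhat l) : ℝ) with hg
  have hfρ : ∀ k j, (inner ℝ (f k) (ρ j) : ℝ) = ∑ l, c l j * g k l := by
    intro k j
    rw [hexp j, inner_sum]
    simp_rw [real_inner_smul_right]
    rfl
  have hkey : ∀ k, ∑ j, (inner ℝ (f k) (ρ j) : ℝ) ^ 2 = ∑ l, lam l * (g k l) ^ 2 := by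
    intro k
    simp_rw [hfρ]
    calc ∑ j, (∑ l, c l j * g k l) ^ 2
        = ∑ j, ∑ l, ∑ m, (c l j * g k l) * (c m j * g k m) := by
          apply Finset.sum_congr rfl; intro j _
          rw [sq, Finset.sum_mul_sum]
      _ = ∑ l, ∑ m, ∑ j, (c l j * g k l) * (c m j * g k m) := by
          rw [Finset.sum_comm]
          apply Finset.sum_congr rfl; intro l _
          rw [Finset.sum_comm]
      _ = ∑ l, ∑ m, (g k l * g k m) * ∑ j, c l j * c m j := by
          apply Finset.sum_congr rfl; intro l _
          apply Finset.sum_congr rfl; intro m _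
          rw [Finset.mul_sum]
          apply Finset.sum_congr rfl; intro j _; ring
      _ = ∑ l, lam l * (g k l) ^ 2 := by
          apply Finset.sum_congr rfl; intro l _
          simp_rw [hcc, mul_ite, mul_zero]
          rw [Finset.sum_ite_eq univ l fun m => g k l * g k m * lam l]
          simp only [Finset.mem_univ, if_true]
          ring
  set b : Fin n → ℝ := fun l => ∑ k, (g k l) ^ 2 with hb
  have hb0 : ∀ l, 0 ≤ b l := fun l => Finset.sum_nonneg (fun k _ => sq_nonneg _)
  have hb1 : ∀ l, b l ≤ 1 := by
    intro l
    have := hf.sum_inner_products_le (ρhat l) (s := univ)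
    rw [hhat.1 l] at this
    simpa [hb, hg, Real.norm_eq_abs, sq_abs] using this
  have hbsum : ∑ l, b l ≤ (nt : ℝ) := by
    have h1 : ∑ l, b l = ∑ k : Fin nt, ∑ l, (g k l) ^ 2 := by
      rw [hb]; exact Finset.sum_comm
    have h2 : ∀ k : Fin nt, ∑ l, (g k l) ^ 2 ≤ 1 := by
      intro k
      have := hhat.sum_inner_products_le (f k) (s := univ)
      rw [hf.1 k] at this
      simp only [one_pow] at this
      refine le_trans (le_of_eq ?_) this
      apply Finset.sum_congr rfl; intro l _
      rw [hg, Real.norm_eq_abs, sq_abs, real_inner_comm]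
    calc ∑ l, b l = ∑ k : Fin nt, ∑ l, (g k l) ^ 2 := h1
      _ ≤ ∑ _k : Fin nt, (1 : ℝ) := Finset.sum_le_sum (fun k _ => h2 k)
      _ = (nt : ℝ) := by simp
  -- the Ky Fan style inequality
  set m0 : Fin n := ⟨nt - 1, by omega⟩ with hm0
  have hKyFan : ∑ l, lam l * b l ≤ ∑ l ∈ A, lam l := by
    have hAsum : ∑ l ∈ A, lam l = ∑ l : Fin n, (if (l : ℕ) < nt then lam l else 0) := by
      rw [hA, Finset.sum_filter]
    have hcard : ∑ l : Fin n, (if (l : ℕ) < nt then (1 : ℝ) else 0) = (nt : ℝ) := by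
      rw [Fin.sum_univ_eq_sum_range (fun i => if i < nt then (1 : ℝ) else 0)]
      rw [Finset.sum_boole]
      have : (Finset.range n).filter (fun i => i < nt) = Finset.range nt := by
        ext i; simp only [Finset.mem_filter, Finset.mem_range]; omega
      rw [this, Finset.card_range]
    have hterm : ∀ l : Fin n, lam l * b l - (if (l : ℕ) < nt then lam l else 0)
        ≤ lam m0 * (b l - (if (l : ℕ) < nt then (1 : ℝ) else 0)) := by
      intro l
      by_cases hl : (l : ℕ) < nt
      · have hle : l ≤ m0 := by rw [Fin.le_def]; simp [hm0]; omega
        have h := hdec l m0 hle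
        simp only [if_pos hl]
        nlinarith [hb1 l]
      · have hle : m0 ≤ l := by rw [Fin.le_def]; simp [hm0]; omega
        have h := hdec m0 l hle
        simp only [if_neg hl]
        nlinarith [hb0 l]
    have hsum : ∑ l, lam l * b l - ∑ l ∈ A, lam l
        ≤ lam m0 * (∑ l, b l - (nt : ℝ)) := by
      rw [hAsum, ← Finset.sum_sub_distrib]
      calc ∑ l, (lam l * b l - (if (l : ℕ) < nt then lam l else 0))
          ≤ ∑ l, lam m0 * (b l - (if (l : ℕ) < nt then (1 : ℝ) else 0)) :=
            Finset.sum_le_sum (fun l _ => hterm l)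
        _ = lam m0 * (∑ l, b l - (nt : ℝ)) := by
            rw [← Finset.mul_sum, Finset.sum_sub_distrib, hcard]
    nlinarith [hbsum, (hpos m0).le]
  -- total energy
  have henergy : ∑ j, ‖ρ j‖ ^ 2 = ∑ k, lam k := by
    have h1 : ∀ j, ‖ρ j‖ ^ 2 = ∑ k, (c k j) ^ 2 := by
      intro j
      conv_lhs => rw [hexp j]
      exact hnorm univ j
    calc ∑ j, ‖ρ j‖ ^ 2 = ∑ j, ∑ k, (c k j) ^ 2 :=
          Finset.sum_congr rfl (fun j _ => h1 j)
      _ = ∑ k, ∑ j, (c k j) ^ 2 := Finset.sum_comm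
      _ = ∑ k, lam k := Finset.sum_congr rfl (fun k _ => hck k)
  -- RHS bound
  have hT : ∑ j, ∑ k, (inner ℝ (f k) (ρ j) : ℝ) ^ 2 ≤ ∑ l ∈ A, lam l := by
    calc ∑ j, ∑ k, (inner ℝ (f k) (ρ j) : ℝ) ^ 2
        = ∑ k, ∑ j, (inner ℝ (f k) (ρ j) : ℝ) ^ 2 := Finset.sum_comm
      _ = ∑ k, ∑ l, lam l * (g k l) ^ 2 := Finset.sum_congr rfl (fun k _ => hkey k)
      _ = ∑ l, lam l * b l := by
          rw [Finset.sum_comm]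
          apply Finset.sum_congr rfl; intro l _
          rw [hb, Finset.mul_sum]
      _ ≤ ∑ l ∈ A, lam l := hKyFan
  have hRHS : ∑ k ∈ B, lam k ≤ ∑ j, (⨅ η : W, ‖ρ j - (η : H)‖ ^ 2) := by
    have h1 : ∑ k ∈ B, lam k
        ≤ ∑ j, (‖ρ j‖ ^ 2 - ∑ k, (inner ℝ (f k) (ρ j) : ℝ) ^ 2) := by
      rw [Finset.sum_sub_distrib, henergy, hAB lam]
      have := hT
      linarith
    exact le_trans h1 (Finset.sum_le_sum (fun j _ => hWlow j))
  exact le_trans hLHS hRHS
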